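/- For 1 < r < 2 there exists a constant c > 0 such that for all real numbers x₁, x₂ not both zero: (|x₂|^{r-2}·x₂ − |x₁|^{r-2}·x₁)·(x₂ − x₁) ≥ c·(|x₂| + |x₁|)^{r-2}·|x₂ − x₁|². -/

import Mathlib

/-!
With `p = r - 1 ∈ (0, 1)`, the map `φ t = |t| ^ (p - 1) * t` is odd and equals `t ^ p` for
`t ≥ 0`. For `0 ≤ a ≤ b`, concavity of `t ^ p` gives `b ^ p - a ^ p ≥ p * b ^ (p - 1) * (b - a)`,
and `b ^ (p - 1) ≥ (a + b) ^ (p - 1)` as `p - 1 < 0`; by oddness this settles the case of arguments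
of equal sign. For `x < 0 < y` we have `φ y - φ x = |x| ^ p + |y| ^ p ≥ (|x| + |y|) ^ p` by
subadditivity, which is the claim with constant `1`. So `c = r - 1` works.
-/

namespace Real

lemma rpow_sub_one_mul_self_of_nonneg {p x : ℝ} (hp : p ≠ 0) (hx : 0 ≤ x) :
    x ^ (p - 1) * x = x ^ p := by
  rw [← rpow_add_one' hx (by simpa using hp), sub_add_cancel]

lemma abs_rpow_sub_one_mul_self_of_nonneg {p x : ℝ} (hp : p ≠ 0) (hx : 0 ≤ x) :
    |x| ^ (p - 1) * x = x ^ p := by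
  rw [abs_of_nonneg hx, rpow_sub_one_mul_self_of_nonneg hp hx]

lemma abs_rpow_sub_one_mul_self_of_nonpos {p x : ℝ} (hp : p ≠ 0) (hx : x ≤ 0) :
    |x| ^ (p - 1) * x = -(-x) ^ p := by
  rw [← abs_neg, ← abs_rpow_sub_one_mul_self_of_nonneg hp (neg_nonneg.2 hx), mul_neg, neg_neg]

lemma rpow_le_rpow_add_mul_sub {p a b : ℝ} (hp0 : 0 ≤ p) (hp1 : p ≤ 1) (ha : 0 ≤ a)
    (hb : 0 < b) : a ^ p ≤ b ^ p + p * b ^ (p - 1) * (a - b) := by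
  have bernoulli := rpow_one_add_le_one_add_mul_self (s := a / b - 1)
    (by linarith [div_nonneg ha hb.le]) hp0 hp1
  rw [add_sub_cancel, div_rpow ha hb.le, div_le_iff₀ (rpow_pos_of_pos hb p)] at bernoulli
  calc a ^ p ≤ (1 + p * (a / b - 1)) * b ^ p := bernoulli
    _ = b ^ p + p * (b ^ p / b) * (a - b) := by field_simp
    _ = b ^ p + p * b ^ (p - 1) * (a - b) := by rw [rpow_sub_one hb.ne']

lemma mul_add_rpow_sub_one_mul_sq_le {p a b : ℝ} (hp0 : 0 ≤ p) (hp1 : p ≤ 1) (ha : 0 ≤ a)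
    (hab : a ≤ b) : p * (b + a) ^ (p - 1) * (b - a) ^ 2 ≤ (b ^ p - a ^ p) * (b - a) := by
  rcases hab.eq_or_lt with rfl | hab
  · simp
  have hb : 0 < b := ha.trans_lt hab
  have tangent := rpow_le_rpow_add_mul_sub hp0 hp1 ha hb
  calc p * (b + a) ^ (p - 1) * (b - a) ^ 2 ≤ p * b ^ (p - 1) * (b - a) ^ 2 := by
        have : (b + a) ^ (p - 1) ≤ b ^ (p - 1) :=
          rpow_le_rpow_of_nonpos hb (by linarith) (by linarith)
        gcongr
    _ = (p * b ^ (p - 1) * (b - a)) * (b - a) := by ring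
    _ ≤ (b ^ p - a ^ p) * (b - a) := by gcongr; linarith

lemma add_rpow_sub_one_mul_sq_le {p a b : ℝ} (hp0 : 0 < p) (hp1 : p ≤ 1) (ha : 0 ≤ a)
    (hb : 0 ≤ b) : (a + b) ^ (p - 1) * (a + b) ^ 2 ≤ (a ^ p + b ^ p) * (a + b) := by
  have hab : 0 ≤ a + b := add_nonneg ha hb
  calc (a + b) ^ (p - 1) * (a + b) ^ 2 = (a + b) ^ p * (a + b) := by
        rw [sq, ← mul_assoc, rpow_sub_one_mul_self_of_nonneg hp0.ne' hab]
    _ ≤ (a ^ p + b ^ p) * (a + b) := by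
        gcongr; exact rpow_add_le_add_rpow ha hb hp0.le hp1

lemma mul_abs_add_abs_rpow_sub_one_mul_sq_le {p x y : ℝ} (hp0 : 0 < p) (hp1 : p ≤ 1) :
    p * (|y| + |x|) ^ (p - 1) * (y - x) ^ 2 ≤
      (|y| ^ (p - 1) * y - |x| ^ (p - 1) * x) * (y - x) := by
  wlog hxy : x ≤ y generalizing x y
  · have := this (le_of_not_ge hxy)
    rw [add_comm]
    linear_combination this
  rcases le_total 0 x with hx | hx
  · rw [abs_rpow_sub_one_mul_self_of_nonneg hp0.ne' hx,
      abs_rpow_sub_one_mul_self_of_nonneg hp0.ne' (hx.trans hxy), abs_of_nonneg hx,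
      abs_of_nonneg (hx.trans hxy)]
    exact mul_add_rpow_sub_one_mul_sq_le hp0.le hp1 hx hxy
  rcases le_total y 0 with hy | hy
  · rw [abs_rpow_sub_one_mul_self_of_nonpos hp0.ne' hx,
      abs_rpow_sub_one_mul_self_of_nonpos hp0.ne' hy, abs_of_nonpos hx, abs_of_nonpos hy]
    have := mul_add_rpow_sub_one_mul_sq_le hp0.le hp1 (neg_nonneg.2 hy) (neg_le_neg hxy)
    rw [add_comm (-y)]
    linear_combination this
  · rw [abs_rpow_sub_one_mul_self_of_nonpos hp0.ne' hx,
      abs_rpow_sub_one_mul_self_of_nonneg hp0.ne' hy, abs_of_nonpos hx, abs_of_nonneg hy,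
      ← sub_eq_add_neg]
    have key := add_rpow_sub_one_mul_sq_le hp0 hp1 hy (neg_nonneg.2 hx)
    rw [← sub_eq_add_neg] at key
    have hQ : 0 ≤ (y - x) ^ (p - 1) * (y - x) ^ 2 :=
      mul_nonneg (rpow_nonneg (by linarith) _) (sq_nonneg _)
    calc p * (y - x) ^ (p - 1) * (y - x) ^ 2 = p * ((y - x) ^ (p - 1) * (y - x) ^ 2) :=
          mul_assoc ..
      _ ≤ (y - x) ^ (p - 1) * (y - x) ^ 2 := mul_le_of_le_one_left hQ hp1
      _ ≤ (y ^ p + (-x) ^ p) * (y - x) := key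
      _ = (y ^ p - -(-x) ^ p) * (y - x) := by rw [sub_neg_eq_add]

end Real

/-- For `1 < r < 2` there exists `c > 0` such that for all real `x₁ x₂` not both zero,
`(|x₂|^(r-2)·x₂ − |x₁|^(r-2)·x₁)·(x₂ − x₁) ≥ c·(|x₂|+|x₁|)^(r-2)·|x₂−x₁|²`. -/
theorem stmt_1 (r : ℝ) (hr1 : 1 < r) (hr2 : r < 2) :
    ∃ c : ℝ, 0 < c ∧ ∀ x₁ x₂ : ℝ, ¬(x₁ = 0 ∧ x₂ = 0) →
      (|x₂| ^ (r - 2) * x₂ - |x₁| ^ (r - 2) * x₁) * (x₂ - x₁) ≥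
        c * (|x₂| + |x₁|) ^ (r - 2) * |x₂ - x₁| ^ (2 : ℝ) := by
  refine ⟨r - 1, by linarith, fun x₁ x₂ _ => ?_⟩
  have h := Real.mul_abs_add_abs_rpow_sub_one_mul_sq_le (x := x₁) (y := x₂)
    (by linarith : 0 < r - 1) (by linarith)
  rw [sub_sub, one_add_one_eq_two] at h
  rwa [Real.rpow_two, sq_abs]
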